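/- arXiv:1302.4860 — 4 statements merged into one kernel-verified Lean document; each statement's English description precedes it below -/
import Mathlib

section
/- Let A(s) be a quadratic matrix polynomial with A₀ invertible and N its Stroh companion matrix. Then for every complex s which is not an eigenvalue of A, the resolvent identity A(s)⁻¹ = L(sI − N)⁻¹R holds, where L = [I 0] and R = [0 I]ᵀ. -/
/-!
The Stroh matrix is a linearization of `A`: for every `s`,
`sI - N = [[-A₀⁻¹, 0], [sI + A₁ᴴA₀⁻¹, I]] * [[-(sA₀ + A₁), I], [A(s), 0]]`.
The first factor is block lower triangular with invertible diagonal, and the second is inverted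
explicitly as `[[0, A(s)⁻¹], [I, (sA₀ + A₁)A(s)⁻¹]]`; multiplying out, the upper right block of
`(sI - N)⁻¹`, which is what `L (sI - N)⁻¹ R` extracts, is `A(s)⁻¹`.
-/

open Matrix

namespace Matrix

variable {l m n o K : Type*} [Fintype l] [Fintype m] [Fintype n] [Fintype o]
  [DecidableEq m] [DecidableEq n]

theorem fromCols_one_zero_mul_mul_fromRows_zero_one [Semiring K] (M : Matrix (m ⊕ o) (l ⊕ n) K) :
    fromCols (1 : Matrix m m K) (0 : Matrix m o K) * M *
        fromRows (0 : Matrix l n K) (1 : Matrix n n K) = M.toBlocks₁₂ := by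
  rw [← fromBlocks_toBlocks M, fromCols_mul_fromBlocks, fromCols_mul_fromRows]
  simp

variable [CommRing K]

theorem inv_fromBlocks_one₁₂_zero₂₂ (X S : Matrix m m K) (hS : IsUnit S.det) :
    (fromBlocks X 1 S 0)⁻¹ = fromBlocks 0 S⁻¹ 1 (-(X * S⁻¹)) := by
  refine inv_eq_right_inv ?_
  simp [fromBlocks_multiply, mul_nonsing_inv S hS, ← fromBlocks_one]

section Stroh

variable (A₀ A₁ B A₂ : Matrix m m K) (s : K)

noncomputable def strohMatrix : Matrix (m ⊕ m) (m ⊕ m) K :=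
  fromBlocks (-(A₀⁻¹ * A₁)) A₀⁻¹ (-A₂ + B * A₀⁻¹ * A₁) (-(B * A₀⁻¹))

theorem smul_one_sub_strohMatrix_eq_mul (hA₀ : IsUnit A₀.det) :
    s • 1 - strohMatrix A₀ A₁ B A₂ =
      fromBlocks (-A₀⁻¹) 0 (s • 1 + B * A₀⁻¹) 1 *
        fromBlocks (-(s • A₀ + A₁)) 1 (s ^ 2 • A₀ + s • (A₁ + B) + A₂) 0 := by
  have hA₀inv : A₀⁻¹ * A₀ = 1 := nonsing_inv_mul A₀ hA₀
  rw [strohMatrix, fromBlocks_multiply, ← fromBlocks_one, fromBlocks_smul, sub_eq_add_neg,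
    fromBlocks_neg, fromBlocks_add]
  congr 1
  · simp only [neg_mul, mul_neg, neg_neg, mul_add, mul_smul_comm, hA₀inv, zero_mul, add_zero]
    module
  · simp
  · simp only [mul_neg, mul_add, add_mul, one_mul, smul_mul_assoc, mul_smul_comm,
      smul_smul, mul_assoc, hA₀inv, mul_one, smul_zero, smul_add]
    module
  · simp

theorem toBlocks₁₂_inv_smul_one_sub_strohMatrix (hA₀ : IsUnit A₀.det)
    (hs : IsUnit (s ^ 2 • A₀ + s • (A₁ + B) + A₂).det) :
    (s • 1 - strohMatrix A₀ A₁ B A₂)⁻¹.toBlocks₁₂ = (s ^ 2 • A₀ + s • (A₁ + B) + A₂)⁻¹ := by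
  have hF : IsUnit (-A₀⁻¹) ↔ IsUnit (1 : Matrix m m K) := by
    simpa [isUnit_iff_isUnit_det] using isUnit_nonsing_inv_det A₀ hA₀
  rw [smul_one_sub_strohMatrix_eq_mul _ _ _ _ _ hA₀, mul_inv_rev,
    inv_fromBlocks_one₁₂_zero₂₂ _ _ hs, inv_fromBlocks_zero₁₂_of_isUnit_iff _ _ _ hF,
    fromBlocks_multiply]
  simp

end Stroh

end Matrix

/-- Resolvent identity for the Stroh companion matrix:
`A(s)⁻¹ = L (sI − N)⁻¹ R`, where `L = [I 0]` and `R = [0 I]ᵀ`,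
whenever `s` is not an eigenvalue of the polynomial `A`. -/
theorem stmt4 {n : ℕ} (A₀ A₁ A₂ : Matrix (Fin n) (Fin n) ℂ)
    (hA₀ : IsUnit A₀.det)
    (A : ℂ → Matrix (Fin n) (Fin n) ℂ)
    (hA : ∀ s : ℂ, A s = s ^ 2 • A₀ + s • (A₁ + A₁ᴴ) + A₂)
    (N : Matrix (Fin n ⊕ Fin n) (Fin n ⊕ Fin n) ℂ)
    (hN : N = Matrix.fromBlocks (-(A₀⁻¹ * A₁)) A₀⁻¹
        (-A₂ + A₁ᴴ * A₀⁻¹ * A₁) (-(A₁ᴴ * A₀⁻¹)))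
    (L : Matrix (Fin n) (Fin n ⊕ Fin n) ℂ)
    (hL : L = Matrix.of fun i j => Sum.elim (fun j' => if i = j' then (1 : ℂ) else 0)
        (fun _ => 0) j)
    (R : Matrix (Fin n ⊕ Fin n) (Fin n) ℂ)
    (hR : R = Matrix.of fun i j => Sum.elim (fun _ => (0 : ℂ))
        (fun i' => if i' = j then 1 else 0) i)
    (s : ℂ) (hs : IsUnit (A s).det) :
    (A s)⁻¹ = L * (s • 1 - N)⁻¹ * R := by
  have hL' : L = fromCols 1 0 := hL
  have hR' : R = fromRows 0 1 := by
    rw [hR]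
    ext (i | i) j <;> rfl
  rw [hA] at hs ⊢
  rw [hL', hR', fromCols_one_zero_mul_mul_fromRows_zero_one, hN,
    ← strohMatrix, toBlocks₁₂_inv_smul_one_sub_strohMatrix _ _ _ _ _ hA₀ hs]
end

section
/- Uniqueness of spectral factorization: Let A(s) be a self-adjoint quadratic matrix polynomial with A₀ positive definite and no real eigenvalues. Suppose A(s) = (sI − Q₁*)A₀(sI − Q₁) = (sI − Q₂*)A₀(sI − Q₂) for all s, where both Q₁ and Q₂ have all their eigenvalues in the open upper half-plane. Then Q₁ = Q₂. -/
/-!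
Comparing the two factorizations at `s = 0` and `s = 1` gives the Sylvester equation
`Q₁ᴴ Y = Y Q₂` for `Y = A₀ (Q₁ - Q₂)`. Then `p(Q₁ᴴ) Y = Y p(Q₂)` for every polynomial `p`; for
`p = χ_{Q₂}` the right side vanishes by Cayley–Hamilton, while `χ_{Q₂}(Q₁ᴴ)` is invertible because
the spectrum of `Q₁ᴴ` lies in the lower half-plane and the roots of `χ_{Q₂}` in the upper one.
Hence `Y = 0`, and `Q₁ = Q₂` as `A₀` is invertible.
-/

open Matrix Polynomial
open scoped ComplexOrder

namespace Matrix

variable {m n R : Type*} [Fintype m] [DecidableEq m] [Fintype n] [DecidableEq n]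

theorem aeval_mul_eq_mul_aeval_of_mul_eq_mul [CommRing R] {X : Matrix m m R} {Z : Matrix n n R}
    {Y : Matrix m n R} (hXYZ : X * Y = Y * Z) (p : R[X]) :
    aeval X p * Y = Y * aeval Z p := by
  induction p using Polynomial.induction_on with
  | C a => simp only [aeval_C, Algebra.algebraMap_eq_smul_one, Matrix.smul_mul, Matrix.mul_smul,
      Matrix.one_mul, Matrix.mul_one]
  | add p q hp hq => simp only [map_add, Matrix.add_mul, Matrix.mul_add, hp, hq]
  | monomial k a ih =>
    simp only [pow_succ, ← mul_assoc, map_mul (aeval _), aeval_X] at ih ⊢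
    rw [Matrix.mul_assoc, hXYZ, ← Matrix.mul_assoc, ih, Matrix.mul_assoc]

theorem isUnit_aeval_charpoly_of_disjoint_spectrum {K A : Type*} [Field K] [IsAlgClosed K]
    [Ring A] [Algebra K A] {a : A} {Z : Matrix n n K}
    (h : Disjoint (spectrum K a) (spectrum K Z)) : IsUnit (aeval a Z.charpoly) := by
  by_contra hnot
  rw [(IsAlgClosed.splits Z.charpoly).eq_prod_roots_of_monic Z.charpoly_monic] at hnot
  obtain ⟨k, hka, hkZ⟩ := spectrum.exists_mem_of_not_isUnit_aeval_prod hnot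
  exact h.notMem_of_mem_left hka (mem_spectrum_iff_isRoot_charpoly.mpr hkZ)

theorem eq_zero_of_mul_eq_mul_of_disjoint_spectrum {K : Type*} [Field K] [IsAlgClosed K]
    {X : Matrix m m K} {Z : Matrix n n K} {Y : Matrix m n K} (hXYZ : X * Y = Y * Z)
    (h : Disjoint (spectrum K X) (spectrum K Z)) : Y = 0 := by
  have hY : aeval X Z.charpoly * Y = 0 := by
    rw [aeval_mul_eq_mul_aeval_of_mul_eq_mul hXYZ, aeval_self_charpoly, Matrix.mul_zero]
  obtain ⟨u, hu⟩ := isUnit_aeval_charpoly_of_disjoint_spectrum (Z := Z) h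
  rw [← hu] at hY
  rw [← Matrix.one_mul Y, ← u.inv_mul, Matrix.mul_assoc, hY, Matrix.mul_zero]

end Matrix

theorem mul_mul_sub_eq_of_forall_factorization_eq {R A : Type*} [CommSemiring R] [Ring A]
    [Algebra R A] {B P₁ P₂ Q₁ Q₂ : A}
    (h : ∀ s : R, (s • 1 - P₁) * B * (s • 1 - Q₁) = (s • 1 - P₂) * B * (s • 1 - Q₂)) :
    P₁ * (B * (Q₁ - Q₂)) = B * (Q₁ - Q₂) * Q₂ := by
  have h₀ := h 0
  have h₁ := h 1
  simp only [zero_smul, one_smul] at h₀ h₁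
  linear_combination (norm := noncomm_ring) h₀ + (h₁ - h₀) * Q₂

theorem stmt7_general {n : ℕ} (A₀ Q₁ Q₂ : Matrix (Fin n) (Fin n) ℂ)
    (hA₀ : A₀.PosDef)
    (A : ℂ → Matrix (Fin n) (Fin n) ℂ)
    (hQ₁ : ∀ μ ∈ spectrum ℂ Q₁, 0 < μ.im)
    (hQ₂ : ∀ μ ∈ spectrum ℂ Q₂, 0 < μ.im)
    (hfac₁ : ∀ s : ℂ, A s = (s • 1 - Q₁ᴴ) * A₀ * (s • 1 - Q₁))
    (hfac₂ : ∀ s : ℂ, A s = (s • 1 - Q₂ᴴ) * A₀ * (s • 1 - Q₂)) :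
    Q₁ = Q₂ := by
  have hsylv : Q₁ᴴ * (A₀ * (Q₁ - Q₂)) = A₀ * (Q₁ - Q₂) * Q₂ :=
    mul_mul_sub_eq_of_forall_factorization_eq fun s => (hfac₁ s).symm.trans (hfac₂ s)
  have hdisj : Disjoint (spectrum ℂ Q₁ᴴ) (spectrum ℂ Q₂) := by
    refine Set.disjoint_left.mpr fun μ hμ₁ hμ₂ => ?_
    rw [← star_eq_conjTranspose, spectrum.map_star, Set.mem_star] at hμ₁
    have him_neg : 0 < -μ.im := by simpa using hQ₁ _ hμ₁
    linarith [hQ₂ μ hμ₂]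
  have hA₀Q : A₀ * (Q₁ - Q₂) = 0 := eq_zero_of_mul_eq_mul_of_disjoint_spectrum hsylv hdisj
  rw [hA₀.isUnit.mul_right_eq_zero, sub_eq_zero] at hA₀Q
  exact hA₀Q

/-- Uniqueness of the spectral factorization: two spectral factors `Q₁`, `Q₂`
with all eigenvalues in the open upper half-plane coincide. -/
theorem stmt7 {n : ℕ} (A₀ A₁ A₂ Q₁ Q₂ : Matrix (Fin n) (Fin n) ℂ)
    (hA₀ : A₀.PosDef) (hA₂ : A₂.IsHermitian)
    (A : ℂ → Matrix (Fin n) (Fin n) ℂ)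
    (hA : ∀ s : ℂ, A s = s ^ 2 • A₀ + s • (A₁ + A₁ᴴ) + A₂)
    (hreg : ∀ t : ℝ, IsUnit (A (t : ℂ)).det)
    (hQ₁ : ∀ μ ∈ spectrum ℂ Q₁, 0 < μ.im)
    (hQ₂ : ∀ μ ∈ spectrum ℂ Q₂, 0 < μ.im)
    (hfac₁ : ∀ s : ℂ, A s = (s • 1 - Q₁ᴴ) * A₀ * (s • 1 - Q₁))
    (hfac₂ : ∀ s : ℂ, A s = (s • 1 - Q₂ᴴ) * A₀ * (s • 1 - Q₂)) :
    Q₁ = Q₂ :=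
  stmt7_general A₀ Q₁ Q₂ hA₀ A hQ₁ hQ₂ hfac₁ hfac₂
end

section
/- Hermiticity of the surface impedance tensor: Let A₀ be positive definite Hermitian, A₁ an arbitrary n×n complex matrix, and Q an n×n matrix with spectrum in the open upper half-plane satisfying the solvency equation A₀Q² + (A₁+A₁*)Q + A₂ − c²ρI = 0, where A₂ is Hermitian, c, ρ real. Then Z := −i(A₀Q + A₁) is Hermitian, i.e., Z* = Z. -/
/-!
The solvency equation says that `M = A₀ Q² + (A₁ + A₁ᴴ) Q` is Hermitian, and expanding gives
`Qᴴ (Zᴴ - Z) - (Zᴴ - Z) Q = i (Mᴴ - M) = 0`. So `Zᴴ - Z` solves a Sylvester equation whose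
coefficients have disjoint spectra (`σ(Qᴴ)` in the lower, `σ(Q)` in the upper half-plane), and
such a solution vanishes: the characteristic polynomial of `Q` kills `Q` but is invertible at `Qᴴ`.
-/

open Matrix Polynomial
open scoped ComplexOrder

theorem Polynomial.aeval_mul_eq_mul_aeval {R A : Type*} [CommSemiring R] [Semiring A]
    [Algebra R A] {a b x : A} (h : a * x = x * b) (p : R[X]) :
    aeval a p * x = x * aeval b p := by
  have hpow : ∀ k : ℕ, a ^ k * x = x * b ^ k := fun k => (SemiconjBy.pow_right h.symm k).symm
  induction p using Polynomial.induction_on' with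
  | add p q hp hq => simp only [map_add, add_mul, mul_add, hp, hq]
  | monomial k r =>
    simp only [aeval_monomial, mul_assoc, hpow k]
    rw [← mul_assoc, ← mul_assoc, Algebra.commutes]

theorem spectrum.isUnit_aeval_of_monic {𝕜 A : Type*} [Field 𝕜] [IsAlgClosed 𝕜] [Ring A]
    [Algebra 𝕜 A] {p : 𝕜[X]} (hp : p.Monic) (a : A) (h : ∀ k ∈ spectrum 𝕜 a, eval k p ≠ 0) :
    IsUnit (aeval a p) := by
  by_contra hu
  rw [(IsAlgClosed.splits p).eq_prod_roots_of_monic hp] at hu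
  obtain ⟨k, hk, hroot⟩ := spectrum.exists_mem_of_not_isUnit_aeval_prod hu
  exact h k hk hroot

theorem Matrix.eq_zero_of_mul_eq_mul_of_disjoint_spectrum_s10 {K n : Type*} [Field K] [IsAlgClosed K]
    [Fintype n] [DecidableEq n] {A B X : Matrix n n K}
    (hAB : Disjoint (spectrum K A) (spectrum K B)) (hX : A * X = X * B) : X = 0 := by
  have hunit : IsUnit (aeval A B.charpoly) :=
    spectrum.isUnit_aeval_of_monic B.charpoly_monic A fun k hkA hroot =>
      hAB.notMem_of_mem_left hkA (mem_spectrum_of_isRoot_charpoly hroot)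
  refine hunit.mul_left_cancel ?_
  rw [aeval_mul_eq_mul_aeval hX, aeval_self_charpoly, mul_zero, mul_zero]

theorem Matrix.disjoint_spectrum_conjTranspose_of_forall_im_pos {n : Type*} [Fintype n]
    [DecidableEq n] {Q : Matrix n n ℂ} (hQ : ∀ μ ∈ spectrum ℂ Q, 0 < μ.im) :
    Disjoint (spectrum ℂ Qᴴ) (spectrum ℂ Q) := by
  rw [Set.disjoint_left, ← star_eq_conjTranspose, spectrum.map_star]
  intro μ hμ hμQ
  have hconj : 0 < (star μ).im := hQ _ hμ
  rw [Complex.star_def, Complex.conj_im] at hconj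
  linarith [hQ μ hμQ]

theorem Matrix.solvency_sylvester_identity {n : Type*} [Fintype n] [DecidableEq n]
    {A₀ A₁ Q : Matrix n n ℂ} (hA₀ : A₀ᴴ = A₀) {Z : Matrix n n ℂ}
    (hZ : Z = (-Complex.I) • (A₀ * Q + A₁)) :
    Qᴴ * (Zᴴ - Z) - (Zᴴ - Z) * Q = Complex.I •
      ((A₀ * Q ^ 2 + (A₁ + A₁ᴴ) * Q)ᴴ - (A₀ * Q ^ 2 + (A₁ + A₁ᴴ) * Q)) := by
  have hZH : Zᴴ = Complex.I • (Qᴴ * A₀ + A₁ᴴ) := by simp [hZ, hA₀]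
  rw [hZH, hZ, neg_smul, sub_neg_eq_add, ← smul_add, mul_smul_comm, smul_mul_assoc, ← smul_sub]
  simp only [conjTranspose_add, conjTranspose_mul, conjTranspose_pow, conjTranspose_conjTranspose,
    hA₀]
  congr 1
  noncomm_ring

/-- Hermiticity of the surface impedance tensor: if `Q` has spectrum in the
open upper half-plane and satisfies the solvency equation
`A₀Q² + (A₁+A₁ᴴ)Q + A₂ − c²ρ I = 0`, then `Z = −i(A₀Q + A₁)` is Hermitian. -/
theorem stmt10 {n : ℕ} (A₀ A₁ A₂ Q : Matrix (Fin n) (Fin n) ℂ)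
    (hA₀ : A₀.PosDef) (hA₂ : A₂.IsHermitian)
    (c ρ : ℝ)
    (hQ : ∀ μ ∈ spectrum ℂ Q, 0 < μ.im)
    (hsolv : A₀ * Q ^ 2 + (A₁ + A₁ᴴ) * Q + A₂ - ((c ^ 2 * ρ : ℝ) : ℂ) • 1 = 0)
    (Z : Matrix (Fin n) (Fin n) ℂ)
    (hZ : Z = (-Complex.I) • (A₀ * Q + A₁)) :
    Zᴴ = Z := by
  have hM : A₀ * Q ^ 2 + (A₁ + A₁ᴴ) * Q = ((c ^ 2 * ρ : ℝ) : ℂ) • 1 - A₂ :=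
    eq_sub_of_add_eq (sub_eq_zero.mp hsolv)
  have hMH : (A₀ * Q ^ 2 + (A₁ + A₁ᴴ) * Q)ᴴ = A₀ * Q ^ 2 + (A₁ + A₁ᴴ) * Q := by
    simp [hM, hA₂.eq]
  have hsylv : Qᴴ * (Zᴴ - Z) = (Zᴴ - Z) * Q := by
    rw [← sub_eq_zero, solvency_sylvester_identity hA₀.isHermitian.eq hZ, hMH, sub_self, smul_zero]
  exact sub_eq_zero.mp <| eq_zero_of_mul_eq_mul_of_disjoint_spectrum_s10
    (disjoint_spectrum_conjTranspose_of_forall_im_pos hQ) hsylv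
end

section
/- Real principal type range–kernel duality: Let A(x) and B(x) be continuous (or smooth) families of n×n complex matrices depending on a real parameter x, and a(x) a real-valued differentiable function, such that B(x)A(x) = a(x)I = A(x)B(x) for all x. Suppose a(x₀) = 0 and a'(x₀) ≠ 0. Then at x = x₀: range(B) = ker(A) and range(A) = ker(B). -/
open Matrix

attribute [local instance] Matrix.normedAddCommGroup Matrix.normedSpace

/-!
At `x₀` both products `BA` and `AB` vanish, so `range B ⊆ ker A` and `range A ⊆ ker B`.
Differentiating `BA = a I` gives `B'A + BA' = a' I` at `x₀`; applied to `v ∈ ker A` this reads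
`a' v = B (A' v)`, so `v ∈ range B` because `a' ≠ 0`. The other equality is symmetric.
-/

theorem HasDerivAt.matrix_mul {𝕜 R l m n : Type*} [NontriviallyNormedField 𝕜] [NormedRing R]
    [NormedAlgebra 𝕜 R] [Fintype l] [Fintype m] [Fintype n]
    {A : 𝕜 → Matrix l m R} {B : 𝕜 → Matrix m n R} {A' : Matrix l m R} {B' : Matrix m n R}
    {x : 𝕜} (hA : HasDerivAt A A' x) (hB : HasDerivAt B B' x) :
    HasDerivAt (fun y => A y * B y) (A' * B x + A x * B') x := by
  have hA_entry (i j) : HasDerivAt (fun y => A y i j) (A' i j) x :=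
    hasDerivAt_pi.mp (hasDerivAt_pi.mp hA i) j
  have hB_entry (i j) : HasDerivAt (fun y => B y i j) (B' i j) x :=
    hasDerivAt_pi.mp (hasDerivAt_pi.mp hB i) j
  refine hasDerivAt_pi.mpr fun i => hasDerivAt_pi.mpr fun j => ?_
  simp only [Matrix.add_apply, Matrix.mul_apply, ← Finset.sum_add_distrib]
  exact HasDerivAt.fun_sum fun k _ => (hA_entry i k).mul (hB_entry k j)

theorem HasDerivAt.mul_add_mul_eq_smul_one {m : Type*} [Fintype m] [DecidableEq m]
    {A B : ℝ → Matrix m m ℂ} {a : ℝ → ℝ} {A' B' : Matrix m m ℂ} {a' x₀ : ℝ}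
    (hA : HasDerivAt A A' x₀) (hB : HasDerivAt B B' x₀) (ha : HasDerivAt a a' x₀)
    (hAB : ∀ x, A x * B x = (a x : ℂ) • 1) :
    A' * B x₀ + A x₀ * B' = (a' : ℂ) • 1 := by
  have hprod := hA.matrix_mul hB
  simp only [hAB] at hprod
  exact hprod.unique (ha.ofReal_comp.smul_const 1)

theorem Matrix.range_mulVecLin_eq_ker_of_mul_eq_zero {K l m n : Type*} [Field K]
    [Fintype l] [Fintype m] [Fintype n] [DecidableEq m]
    {P : Matrix l m K} {Q : Matrix m n K} {E : Matrix m l K} {D : Matrix n m K} {c : K}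
    (hc : c ≠ 0) (hPQ : P * Q = 0) (hEP_QD : E * P + Q * D = c • 1) :
    LinearMap.range Q.mulVecLin = LinearMap.ker P.mulVecLin := by
  refine le_antisymm ?_ fun v hv => ⟨c⁻¹ • (D *ᵥ v), ?_⟩
  · rintro _ ⟨w, rfl⟩
    simp [Matrix.mulVec_mulVec, hPQ]
  · have hPv : P *ᵥ v = 0 := hv
    have hcv : Q *ᵥ (D *ᵥ v) = c • v := by
      have := congrArg (· *ᵥ v) hEP_QD
      simpa [Matrix.add_mulVec, ← Matrix.mulVec_mulVec, hPv, Matrix.smul_mulVec] using this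
    simp [hcv, smul_smul, inv_mul_cancel₀ hc]

theorem stmt19_general {n : ℕ} (A B : ℝ → Matrix (Fin n) (Fin n) ℂ)
    (a : ℝ → ℝ) (x₀ : ℝ)
    (A' B' : Matrix (Fin n) (Fin n) ℂ) (a' : ℝ)
    (hA' : HasDerivAt A A' x₀) (hB' : HasDerivAt B B' x₀)
    (ha' : HasDerivAt a a' x₀)
    (hBA : ∀ x : ℝ, B x * A x = (a x : ℂ) • 1)
    (hAB : ∀ x : ℝ, A x * B x = (a x : ℂ) • 1)
    (ha₀ : a x₀ = 0) (ha'0 : a' ≠ 0) :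
    LinearMap.range (B x₀).mulVecLin = LinearMap.ker (A x₀).mulVecLin ∧
      LinearMap.range (A x₀).mulVecLin = LinearMap.ker (B x₀).mulVecLin := by
  have hc : (a' : ℂ) ≠ 0 := Complex.ofReal_ne_zero.mpr ha'0
  have hAB₀ : A x₀ * B x₀ = 0 := by simp [hAB, ha₀]
  have hBA₀ : B x₀ * A x₀ = 0 := by simp [hBA, ha₀]
  exact ⟨range_mulVecLin_eq_ker_of_mul_eq_zero hc hAB₀
      (hB'.mul_add_mul_eq_smul_one hA' ha' hBA),
    range_mulVecLin_eq_ker_of_mul_eq_zero hc hBA₀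
      (hA'.mul_add_mul_eq_smul_one hB' ha' hAB)⟩

/-- Real principal type range–kernel duality: if `B(x)A(x) = a(x)I = A(x)B(x)`
for differentiable families of matrices `A`, `B` and a real scalar function
`a` with `a(x₀) = 0` and `a'(x₀) ≠ 0`, then at `x₀` the range of `B` equals
the kernel of `A` and the range of `A` equals the kernel of `B`. -/
theorem stmt19 {n : ℕ} (A B : ℝ → Matrix (Fin n) (Fin n) ℂ)
    (a : ℝ → ℝ) (x₀ : ℝ)
    (A' B' : Matrix (Fin n) (Fin n) ℂ) (a' : ℝ)
    (hAcont : Continuous A) (hBcont : Continuous B) (hacont : Continuous a)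
    (hA' : HasDerivAt A A' x₀) (hB' : HasDerivAt B B' x₀)
    (ha' : HasDerivAt a a' x₀)
    (hBA : ∀ x : ℝ, B x * A x = (a x : ℂ) • 1)
    (hAB : ∀ x : ℝ, A x * B x = (a x : ℂ) • 1)
    (ha₀ : a x₀ = 0) (ha'0 : a' ≠ 0) :
    LinearMap.range (B x₀).mulVecLin = LinearMap.ker (A x₀).mulVecLin ∧
      LinearMap.range (A x₀).mulVecLin = LinearMap.ker (B x₀).mulVecLin :=
  stmt19_general A B a x₀ A' B' a' hA' hB' ha' hBA hAB ha₀ ha'0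
end
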